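/- Let φ'(t) = (b/(δ sinh b)) I₀(b√(1 - (2t/δ - 1)²)) for 0 ≤ t ≤ δ and φ'(t) = 0 otherwise, with b, δ > 0, and φ(t) = ∫₀^t φ'(τ) dτ. Then φ(t) = 0 for t ≤ 0, φ is nondecreasing, and φ(t) = 1 for t ≥ δ. -/

import Mathlib

open Real intervalIntegral

/-- Modified Bessel function of the first kind of order zero. -/
noncomputable def besselI0 (x : ℝ) : ℝ :=
  (1 / Real.pi) * ∫ θ in (0:ℝ)..Real.pi, Real.exp (x * Real.cos θ)

/-- Derivative of the Kaiser–Bessel blending window on `[0,δ]`. -/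
noncomputable def kbWindowDeriv (b δ t : ℝ) : ℝ :=
  if 0 ≤ t ∧ t ≤ δ then
    (b / (δ * Real.sinh b)) * besselI0 (b * Real.sqrt (1 - (2 * t / δ - 1) ^ 2))
  else 0

/-- Kaiser–Bessel blending window `φ(t) = ∫₀ᵗ φ'(τ) dτ`. -/
noncomputable def kbWindow (b δ t : ℝ) : ℝ :=
  ∫ τ in (0:ℝ)..t, kbWindowDeriv b δ τ

/-!
Expanding `exp` under the integral defining `I₀` gives
`I₀(x) = ∑ₖ x^{2k}/(2k)! · (1/π) ∫₀^π cos^{2k}`. Substitute `x = b√(1-u²)` and integrate term by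
term over `[-1, 1]`: since `∫₋₁¹ (1-u²)^k du = ∫₀^π sin^{2k+1}`, the two Wallis integrals combine
to `(∫₀^π cos^{2k}) (∫₀^π sin^{2k+1}) = 2π/(2k+1)`, and the series becomes
`∑ₖ 2b^{2k}/(2k+1)! = 2 sinh b / b`. After the affine change `u = 2t/δ - 1` this says `∫₀^δ φ' = 1`;
as `φ' ≥ 0` vanishes off `[0, δ]`, `φ` rises monotonically from `0` to `1` across `[0, δ]`.
-/

open MeasureTheory Set
open scoped Nat Interval

theorem hasSum_intervalIntegral_of_norm_le {ι E : Type*} [Countable ι] [NormedAddCommGroup E]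
    [NormedSpace ℝ E] {μ : Measure ℝ} [IsLocallyFiniteMeasure μ] {F : ι → ℝ → E} {f : ℝ → E}
    {M : ι → ℝ} {a b : ℝ} (hF : ∀ i, AEStronglyMeasurable (F i) (μ.restrict (Ι a b)))
    (hM : Summable M) (hFM : ∀ i, ∀ t ∈ Ι a b, ‖F i t‖ ≤ M i)
    (hf : ∀ t ∈ Ι a b, HasSum (fun i => F i t) (f t)) :
    HasSum (fun i => ∫ t in a..b, F i t ∂μ) (∫ t in a..b, f t ∂μ) :=
  hasSum_integral_of_dominated_convergence (fun i _ => M i) hF (fun i => ae_of_all _ (hFM i))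
    (ae_of_all _ fun _ _ => hM) intervalIntegrable_const (ae_of_all _ hf)

theorem intervalIntegral_eq_zero_of_forall_mem_Ioo {E : Type*} [NormedAddCommGroup E]
    [NormedSpace ℝ E] {f : ℝ → E} {a b : ℝ} (hab : a ≤ b) (hf : ∀ x ∈ Ioo a b, f x = 0) :
    ∫ x in a..b, f x = 0 := by
  rw [integral_of_le hab, integral_Ioc_eq_integral_Ioo]
  exact setIntegral_eq_zero_of_forall_eq_zero hf

theorem monotone_intervalIntegral_of_nonneg {f : ℝ → ℝ} (a : ℝ)
    (hf : ∀ s t, IntervalIntegrable f volume s t) (hf₀ : 0 ≤ f) :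
    Monotone fun t => ∫ x in a..t, f x := by
  intro s t hst
  dsimp only
  rw [← integral_add_adjacent_intervals (hf a s) (hf s t)]
  exact le_add_of_nonneg_right (integral_nonneg hst fun x _ => hf₀ x)

theorem integral_cos_pow_odd (k : ℕ) : ∫ x in 0..π, cos x ^ (2 * k + 1) = 0 := by
  simpa using integral_sin_pow_mul_cos_pow_odd (a := 0) (b := π) 0 k

theorem integral_one_sub_sq_pow (k : ℕ) :
    ∫ u in (-1 : ℝ)..1, (1 - u ^ 2) ^ k = ∫ x in 0..π, sin x ^ (2 * k + 1) := by
  simpa using (integral_sin_pow_odd_mul_cos_pow (a := 0) (b := π) k 0).symm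

theorem integral_cos_pow_even_mul_integral_sin_pow_odd (k : ℕ) :
    (∫ x in 0..π, cos x ^ (2 * k)) * (∫ x in 0..π, sin x ^ (2 * k + 1)) = 2 * π / (2 * k + 1) := by
  induction k with
  | zero => norm_num [mul_comm]
  | succ k ih =>
    rw [show 2 * (k + 1) = 2 * k + 2 by ring, show 2 * k + 2 + 1 = 2 * k + 1 + 2 by ring,
      integral_cos_pow, integral_sin_pow]
    simp only [sin_zero, sin_pi, zero_pow (Nat.succ_ne_zero _), mul_zero, sub_zero, zero_div,
      zero_add]
    calc _ = (2 * k + 1) / (2 * k + 3) *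
          ((∫ x in 0..π, cos x ^ (2 * k)) * ∫ x in 0..π, sin x ^ (2 * k + 1)) := by
          push_cast; field_simp; ring
      _ = _ := by rw [ih]; push_cast; field_simp; ring

@[fun_prop]
theorem continuous_besselI0 : Continuous besselI0 :=
  continuous_const.mul <| continuous_parametric_intervalIntegral_of_continuous'
    (f := fun x θ => exp (x * cos θ)) (by fun_prop) 0 π

theorem besselI0_nonneg (x : ℝ) : 0 ≤ besselI0 x :=
  mul_nonneg (by positivity) (integral_nonneg pi_pos.le fun θ _ => (exp_pos _).le)

noncomputable def besselI0Coeff (k : ℕ) : ℝ :=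
  (∫ θ in 0..π, cos θ ^ (2 * k)) / (π * (2 * k)!)

theorem abs_besselI0Coeff_le (k : ℕ) : |besselI0Coeff k| ≤ ((2 * k)! : ℝ)⁻¹ := by
  have hint : |∫ θ in 0..π, cos θ ^ (2 * k)| ≤ π := by
    simpa [abs_of_pos pi_pos] using norm_integral_le_of_norm_le_const (a := 0) (b := π) (C := 1)
      (f := fun θ => cos θ ^ (2 * k)) fun θ _ => by
        simpa using pow_le_one₀ (abs_nonneg _) (abs_cos_le_one θ)
  have hpos : 0 < π * (2 * k)! := by positivity
  rw [besselI0Coeff, abs_div, abs_of_pos hpos, div_le_iff₀ hpos]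
  calc |∫ θ in 0..π, cos θ ^ (2 * k)| ≤ π := hint
    _ = _ := by field_simp

theorem besselI0Coeff_mul_integral_one_sub_sq_pow (k : ℕ) :
    besselI0Coeff k * ∫ u in (-1 : ℝ)..1, (1 - u ^ 2) ^ k = 2 / (2 * k + 1)! := by
  rw [besselI0Coeff, integral_one_sub_sq_pow, div_mul_eq_mul_div,
    integral_cos_pow_even_mul_integral_sin_pow_odd, Nat.factorial_succ]
  push_cast
  field_simp

theorem hasSum_besselI0 (x : ℝ) :
    HasSum (fun k => besselI0Coeff k * x ^ (2 * k)) (besselI0 x) := by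
  have hexp : HasSum (fun n => ∫ θ in 0..π, x ^ n / n ! * cos θ ^ n)
      (∫ θ in 0..π, exp (x * cos θ)) := by
    refine hasSum_intervalIntegral_of_norm_le (M := fun n => |x| ^ n / n !)
      (fun n => by fun_prop) (Real.summable_pow_div_factorial |x|) (fun n θ _ => ?_)
      (fun θ _ => ?_)
    · rw [norm_mul, norm_div, norm_pow, norm_pow, Real.norm_eq_abs, Real.norm_natCast]
      exact mul_le_of_le_one_right (by positivity) (pow_le_one₀ (abs_nonneg _) (abs_cos_le_one θ))
    · simpa [exp_eq_exp_ℝ, mul_pow, div_mul_eq_mul_div] using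
        NormedSpace.expSeries_div_hasSum_exp (x * cos θ)
  simp_rw [intervalIntegral.integral_const_mul] at hexp
  have hodd : ∀ n ∉ range (2 * ·), x ^ n / n ! * ∫ θ in 0..π, cos θ ^ n = 0 := by
    intro n hn
    rcases Nat.even_or_odd' n with ⟨k, rfl | rfl⟩
    · exact absurd ⟨k, rfl⟩ hn
    · rw [integral_cos_pow_odd, mul_zero]
  have heven := ((mul_right_injective₀ two_ne_zero).hasSum_iff hodd).2 hexp |>.div_const π
  have hcoeff (k : ℕ) : x ^ (2 * k) / (2 * k)! * (∫ θ in 0..π, cos θ ^ (2 * k)) / π =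
      besselI0Coeff k * x ^ (2 * k) := by
    rw [besselI0Coeff]
    field_simp
  simp_rw [Function.comp_apply, hcoeff] at heven
  rwa [besselI0, one_div, inv_mul_eq_div]

theorem integral_besselI0_mul_sqrt_one_sub_sq {b : ℝ} (hb : b ≠ 0) :
    ∫ u in (-1 : ℝ)..1, besselI0 (b * √(1 - u ^ 2)) = 2 * sinh b / b := by
  have hseries : HasSum
      (fun k => ∫ u in (-1 : ℝ)..1, besselI0Coeff k * b ^ (2 * k) * (1 - u ^ 2) ^ k)
      (∫ u in (-1 : ℝ)..1, besselI0 (b * √(1 - u ^ 2))) := by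
    refine hasSum_intervalIntegral_of_norm_le (M := fun k => b ^ (2 * k) / (2 * k)!)
      (fun k => by fun_prop) (hasSum_cosh b).summable (fun k u hu => ?_) (fun u hu => ?_)
    all_goals
      rw [uIoc_of_le (by norm_num)] at hu
      have hu₀ : 0 ≤ 1 - u ^ 2 := by nlinarith [hu.1, hu.2]
    · have hb₀ : 0 ≤ b ^ (2 * k) := (even_two_mul k).pow_nonneg b
      calc ‖besselI0Coeff k * b ^ (2 * k) * (1 - u ^ 2) ^ k‖
          = |besselI0Coeff k| * b ^ (2 * k) * (1 - u ^ 2) ^ k := by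
            rw [norm_mul, norm_mul, Real.norm_eq_abs, Real.norm_of_nonneg hb₀,
              Real.norm_of_nonneg (pow_nonneg hu₀ k)]
        _ ≤ ((2 * k)! : ℝ)⁻¹ * b ^ (2 * k) * 1 := by
            gcongr
            exacts [abs_besselI0Coeff_le k, pow_le_one₀ hu₀ (by nlinarith)]
        _ = b ^ (2 * k) / (2 * k)! := by ring
    · have hpow (k : ℕ) : (b * √(1 - u ^ 2)) ^ (2 * k) = b ^ (2 * k) * (1 - u ^ 2) ^ k := by
        rw [mul_pow, pow_mul √_, sq_sqrt hu₀]
      have := hasSum_besselI0 (b * √(1 - u ^ 2))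
      simp_rw [hpow, ← mul_assoc] at this
      exact this
  have hterm (k : ℕ) : ∫ u in (-1 : ℝ)..1, besselI0Coeff k * b ^ (2 * k) * (1 - u ^ 2) ^ k
      = 2 / b * (b ^ (2 * k + 1) / (2 * k + 1)!) := by
    rw [intervalIntegral.integral_const_mul, mul_right_comm,
      besselI0Coeff_mul_integral_one_sub_sq_pow, pow_succ]
    field_simp
  simp_rw [hterm] at hseries
  rw [hseries.unique ((hasSum_sinh b).mul_left (2 / b))]
  ring

theorem kbWindowDeriv_eq_indicator (b δ : ℝ) :
    kbWindowDeriv b δ = (Icc 0 δ).indicator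
      fun t => b / (δ * sinh b) * besselI0 (b * √(1 - (2 * t / δ - 1) ^ 2)) := by
  ext t
  simp only [kbWindowDeriv, indicator, mem_Icc]

theorem integrable_kbWindowDeriv (b δ : ℝ) : Integrable (kbWindowDeriv b δ) := by
  rw [kbWindowDeriv_eq_indicator]
  exact (Continuous.integrableOn_Icc (by fun_prop)).integrable_indicator measurableSet_Icc

theorem kbWindowDeriv_eq_zero_of_neg {b δ t : ℝ} (ht : t < 0) : kbWindowDeriv b δ t = 0 :=
  if_neg fun h => ht.not_ge h.1

theorem kbWindowDeriv_eq_zero_of_lt {b δ t : ℝ} (ht : δ < t) : kbWindowDeriv b δ t = 0 :=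
  if_neg fun h => ht.not_ge h.2

theorem kbWindowDeriv_nonneg {b δ : ℝ} (hb : 0 ≤ b) (t : ℝ) : 0 ≤ kbWindowDeriv b δ t := by
  unfold kbWindowDeriv
  split_ifs with ht
  · have : 0 ≤ δ := ht.1.trans ht.2
    have := sinh_nonneg_iff.2 hb
    exact mul_nonneg (by positivity) (besselI0_nonneg _)
  · rfl

theorem integral_kbWindowDeriv {b δ : ℝ} (hb : b ≠ 0) (hδ : 0 < δ) :
    ∫ t in 0..δ, kbWindowDeriv b δ t = 1 := by
  have hsub : ∀ t, 2 * t / δ - 1 = t / (δ / 2) - 1 := fun t => by ring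
  calc ∫ t in 0..δ, kbWindowDeriv b δ t
      = ∫ t in 0..δ, b / (δ * sinh b) * besselI0 (b * √(1 - (t / (δ / 2) - 1) ^ 2)) :=
        integral_congr fun t ht => by
          rw [uIcc_of_le hδ.le] at ht
          rw [kbWindowDeriv_eq_indicator, indicator_of_mem ht, hsub]
    _ = 1 := by
        rw [intervalIntegral.integral_const_mul, integral_comp_div_sub
          (fun u => besselI0 (b * √(1 - u ^ 2))) (by positivity : δ / 2 ≠ 0)]
        have hsinh : sinh b ≠ 0 := sinh_ne_zero.2 hb
        have hδ2 : δ / (δ / 2) - 1 = 1 := by field_simp; norm_num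
        rw [zero_div, zero_sub, hδ2, integral_besselI0_mul_sqrt_one_sub_sq hb, smul_eq_mul]
        field_simp

/-- The blending window `φ` vanishes for `t ≤ 0`, is nondecreasing, and equals `1`
for `t ≥ δ`. -/
theorem kb_window_blending (b δ : ℝ) (hb : 0 < b) (hδ : 0 < δ) :
    (∀ t ≤ (0:ℝ), kbWindow b δ t = 0) ∧
    Monotone (kbWindow b δ) ∧
    (∀ t, δ ≤ t → kbWindow b δ t = 1) := by
  have hint (s t : ℝ) : IntervalIntegrable (kbWindowDeriv b δ) volume s t :=
    (integrable_kbWindowDeriv b δ).intervalIntegrable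
  refine ⟨fun t ht => ?_, monotone_intervalIntegral_of_nonneg 0 hint (kbWindowDeriv_nonneg hb.le),
    fun t ht => ?_⟩
  · rw [kbWindow, integral_symm, neg_eq_zero]
    exact intervalIntegral_eq_zero_of_forall_mem_Ioo ht fun x hx =>
      kbWindowDeriv_eq_zero_of_neg hx.2
  · have htail : ∫ x in δ..t, kbWindowDeriv b δ x = 0 :=
      intervalIntegral_eq_zero_of_forall_mem_Ioo ht fun x hx => kbWindowDeriv_eq_zero_of_lt hx.1
    rw [kbWindow, ← integral_add_adjacent_intervals (hint 0 δ) (hint δ t),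
      integral_kbWindowDeriv hb.ne' hδ, htail, add_zero]
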